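/- Matroid center via partition bases: let M be a matroid on a finite nonempty ground set S of points of a metric space, let S₁, …, S_h be a partition of S, and suppose there exist points p₁, …, p_h and δ ≥ 0 such that dist(q, p_i) ≤ δ for every q ∈ S_i and every i. For each i let B_i be a maximal independent subset of S_i. Then for every nonempty independent set C of M there exists a nonempty independent set C' ⊆ ⋃_{i=1}^h B_i such that r_{C'}(S) ≤ r_C(S) + 2δ. In particular, taking C an optimal matroid-center solution and δ = ε · r*(M), the set Q = ⋃_i B_i contains an independent set C' with r_{C'}(S) ≤ (1 + 2ε) · r*(M). -/

import Mathlib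

/-- `setDist p C = min_{q ∈ C} dist p q` (as an infimum). -/
noncomputable def setDist {X : Type*} [MetricSpace X] (p : X) (C : Set X) : ℝ :=
  sInf ((dist p) '' C)

/-- `rad S C = max_{p ∈ S} dist(p, C)`, the radius of `C` with respect to `S`. -/
noncomputable def rad {X : Type*} [MetricSpace X] (S C : Set X) : ℝ :=
  sSup ((fun p => setDist p C) '' S)

/-- `matroidOpt M = r*(M)`, the optimal matroid-center radius:
the minimum of `rad M.E C` over nonempty independent sets `C` of `M`. -/
noncomputable def matroidOpt {X : Type*} [MetricSpace X] (M : Matroid X) : ℝ :=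
  sInf { r : ℝ | ∃ C : Set X, M.Indep C ∧ C.Nonempty ∧ r = rad M.E C }

/-!
Replace each element `c` of `C` lying outside `⋃ i, B i` by an element of the basis `B i` of
its own part: since `c ∈ cl(B i)` but `c ∉ cl(C \ {c})`, some `b ∈ B i` avoids `cl(C \ {c})`,
so `C - c + b` is independent and still meets every part that `C` meets. Iterating gives an
independent `C' ⊆ ⋃ i, B i` meeting every part met by `C`. Every centre of `C` then has a centre
of `C'` in its part, at distance at most `2δ`, so the radius grows by at most `2δ`.
-/

open Set Function

section

variable {X : Type*} [MetricSpace X]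

lemma setDist_nonneg (p : X) (C : Set X) : 0 ≤ setDist p C :=
  Real.sInf_nonneg (by rintro _ ⟨q, -, rfl⟩; exact dist_nonneg)

lemma setDist_le_dist {p c : X} {C : Set X} (hc : c ∈ C) : setDist p C ≤ dist p c :=
  csInf_le ⟨0, by rintro _ ⟨q, -, rfl⟩; exact dist_nonneg⟩ ⟨c, hc, rfl⟩

lemma setDist_le_setDist_add {C C' : Set X} {r : ℝ} (hC : C.Nonempty)
    (hnear : ∀ c ∈ C, ∃ c' ∈ C', dist c c' ≤ r) (p : X) :
    setDist p C' ≤ setDist p C + r := by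
  suffices setDist p C' - r ≤ setDist p C by linarith
  refine le_csInf (hC.image _) ?_
  rintro _ ⟨c, hc, rfl⟩
  obtain ⟨c', hc', hcc'⟩ := hnear c hc
  linarith [setDist_le_dist (p := p) hc', dist_triangle p c c']

lemma setDist_le_rad {S : Set X} (hS : S.Finite) {p : X} (hp : p ∈ S) (C : Set X) :
    setDist p C ≤ rad S C :=
  le_csSup (hS.image _).bddAbove ⟨p, hp, rfl⟩

lemma rad_nonneg (S C : Set X) : 0 ≤ rad S C :=
  Real.sSup_nonneg (by rintro _ ⟨p, -, rfl⟩; exact setDist_nonneg p C)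

lemma rad_le_rad_add {S C C' : Set X} {r : ℝ} (hS : S.Finite) (hC : C.Nonempty)
    (hnear : ∀ c ∈ C, ∃ c' ∈ C', dist c c' ≤ r) : rad S C' ≤ rad S C + r := by
  have hr : 0 ≤ r := by
    obtain ⟨c, hc⟩ := hC
    obtain ⟨c', -, hcc'⟩ := hnear c hc
    exact dist_nonneg.trans hcc'
  refine Real.sSup_le ?_ (by linarith [rad_nonneg S C])
  rintro _ ⟨p, hp, rfl⟩
  linarith [setDist_le_setDist_add hC hnear p, setDist_le_rad hS hp C]

end

namespace Matroid

variable {α : Type*} {M : Matroid α} {B C : Set α} {c : α}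

lemma Indep.exists_insert_sdiff_indep_of_mem_closure (hC : M.Indep C) (hcC : c ∈ C)
    (hcB : c ∈ M.closure B) : ∃ b ∈ B, M.Indep (insert b (C \ {c})) := by
  have hCc : M.Indep (C \ {c}) := hC.subset sdiff_subset
  by_contra! h
  have hBcl : B ∩ M.E ⊆ M.closure (C \ {c}) := fun b ⟨hbB, hbE⟩ ↦ by
    by_contra hb
    exact h b hbB (hCc.insert_indep_iff.2 (.inl ⟨hbE, hb⟩))
  rw [← closure_inter_ground] at hcB
  exact hC.notMem_closure_sdiff_of_mem hcC (M.closure_subset_closure_of_subset_closure hBcl hcB)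

lemma Indep.exists_subset_iUnion_forall_inter_nonempty {ι : Type*} {S B : ι → Set α}
    (hdisj : Pairwise (Disjoint on S)) (hBS : ∀ i, B i ⊆ S i)
    (hSB : ∀ i, S i ⊆ M.closure (B i)) (hE : M.E ⊆ ⋃ i, S i) (hC : M.Indep C)
    (hCfin : C.Finite) :
    ∃ C' ⊆ ⋃ i, B i, M.Indep C' ∧ ∀ i, (C ∩ S i).Nonempty → (C' ∩ S i).Nonempty := by
  obtain ⟨n, hn⟩ : ∃ n, (C \ ⋃ i, B i).ncard = n := ⟨_, rfl⟩
  induction n generalizing C with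
  | zero =>
    have hCB := (ncard_eq_zero hCfin.sdiff).1 hn
    exact ⟨C, sdiff_eq_empty.1 hCB, hC, fun _ h ↦ h⟩
  | succ n ih =>
    obtain ⟨c, hcD⟩ : (C \ ⋃ i, B i).Nonempty := nonempty_of_ncard_ne_zero (by omega)
    obtain ⟨i, hci⟩ := mem_iUnion.1 (hE (hC.subset_ground hcD.1))
    obtain ⟨b, hbB, hb⟩ := hC.exists_insert_sdiff_indep_of_mem_closure hcD.1 (hSB i hci)
    have hbU : b ∈ ⋃ j, B j := mem_iUnion_of_mem i hbB
    have hdiff : insert b (C \ {c}) \ ⋃ j, B j = (C \ ⋃ j, B j) \ {c} := by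
      ext x
      by_cases hxb : x = b
      · subst hxb; simp [hbU]
      · simp [hxb, and_right_comm]
    obtain ⟨C', hC'B, hC', hmeet⟩ := ih hb (hCfin.sdiff.insert b) (by
      rw [hdiff, ncard_sdiff_singleton_of_mem hcD, hn, Nat.add_sub_cancel])
    refine ⟨C', hC'B, hC', fun j ⟨q, hqC, hqj⟩ ↦ hmeet j ?_⟩
    obtain rfl | hqc := eq_or_ne q c
    · obtain rfl : i = j := hdisj.eq (not_disjoint_iff.2 ⟨q, hci, hqj⟩)
      exact ⟨b, mem_insert _ _, hBS i hbB⟩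
    · exact ⟨q, mem_insert_of_mem _ ⟨hqC, hqc⟩, hqj⟩

end Matroid

theorem stmt19_general {X : Type*} [MetricSpace X] (M : Matroid X)
    (hfin : M.E.Finite)
    (h : ℕ) (Sp : Fin h → Set X)
    (hdisj : ∀ i j, i ≠ j → Disjoint (Sp i) (Sp j))
    (hcover : (⋃ i, Sp i) = M.E)
    (pts : Fin h → X) (δ : ℝ)
    (hclose : ∀ i, ∀ q ∈ Sp i, dist q (pts i) ≤ δ)
    (B : Fin h → Set X)
    (hBsub : ∀ i, B i ⊆ Sp i)
    (hBind : ∀ i, M.Indep (B i))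
    (hBmax : ∀ i, ∀ B'' : Set X, M.Indep B'' → B i ⊆ B'' → B'' ⊆ Sp i → B'' = B i) :
    (∀ C : Set X, M.Indep C → C.Nonempty →
      ∃ C' : Set X, C' ⊆ (⋃ i, B i) ∧ M.Indep C' ∧ C'.Nonempty ∧
        rad M.E C' ≤ rad M.E C + 2 * δ) ∧
    (∀ ε : ℝ, 0 ≤ ε → δ = ε * matroidOpt M →
      ∀ C : Set X, M.Indep C → C.Nonempty → rad M.E C = matroidOpt M →
        ∃ C' : Set X, C' ⊆ (⋃ i, B i) ∧ M.Indep C' ∧ C'.Nonempty ∧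
          rad M.E C' ≤ (1 + 2 * ε) * matroidOpt M) := by
  have hSB : ∀ i, Sp i ⊆ M.closure (B i) := fun i ↦
    ((hBind i).isBasis_of_maximal_subset (hBsub i)
      (fun J hJ hBJ hJS ↦ (hBmax i J hJ hBJ hJS).le) (hcover ▸ subset_iUnion Sp i)).subset_closure
  have hexchange : ∀ C : Set X, M.Indep C → C.Nonempty →
      ∃ C' : Set X, C' ⊆ (⋃ i, B i) ∧ M.Indep C' ∧ C'.Nonempty ∧
        rad M.E C' ≤ rad M.E C + 2 * δ := by
    intro C hC hCne
    obtain ⟨C', hC'B, hC', hmeet⟩ := hC.exists_subset_iUnion_forall_inter_nonempty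
      (fun i j ↦ hdisj i j) hBsub hSB hcover.ge (hfin.subset hC.subset_ground)
    have hnear : ∀ c ∈ C, ∃ c' ∈ C', dist c c' ≤ 2 * δ := by
      intro c hc
      obtain ⟨i, hci⟩ := mem_iUnion.1 (hcover.ge (hC.subset_ground hc))
      obtain ⟨c', hc'C', hc'i⟩ := hmeet i ⟨c, hc, hci⟩
      exact ⟨c', hc'C', by
        linarith [dist_triangle_right c c' (pts i), hclose i c hci, hclose i c' hc'i]⟩
    obtain ⟨c, hc⟩ := hCne
    obtain ⟨c', hc', -⟩ := hnear c hc
    exact ⟨C', hC'B, hC', ⟨c', hc'⟩, rad_le_rad_add hfin ⟨c, hc⟩ hnear⟩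
  refine ⟨hexchange, fun ε _ hδε C hC hCne hCopt ↦ ?_⟩
  obtain ⟨C', hC'B, hC', hC'ne, hrad⟩ := hexchange C hC hCne
  exact ⟨C', hC'B, hC', hC'ne, by rw [hCopt, hδε] at hrad; linarith⟩

/-- Matroid center via partition bases: if `S₁, …, S_h` is a partition of the ground set
`S` of `M`, each part `S_i` has all its points within distance `δ` of a point `p_i`, and
`B_i` is a maximal independent subset of `S_i`, then for every nonempty independent set
`C` there is a nonempty independent set `C' ⊆ ⋃ i, B_i` with `r_{C'}(S) ≤ r_C(S) + 2δ`.
In particular, taking `C` an optimal matroid-center solution and `δ = ε·r*(M)`, the set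
`⋃ i, B_i` contains an independent `C'` with `r_{C'}(S) ≤ (1+2ε)·r*(M)`. -/
theorem stmt19 {X : Type*} [MetricSpace X] (M : Matroid X)
    (hfin : M.E.Finite) (hne : M.E.Nonempty)
    (h : ℕ) (Sp : Fin h → Set X)
    (hdisj : ∀ i j, i ≠ j → Disjoint (Sp i) (Sp j))
    (hcover : (⋃ i, Sp i) = M.E)
    (pts : Fin h → X) (δ : ℝ) (hδ : 0 ≤ δ)
    (hclose : ∀ i, ∀ q ∈ Sp i, dist q (pts i) ≤ δ)
    (B : Fin h → Set X)
    (hBsub : ∀ i, B i ⊆ Sp i)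
    (hBind : ∀ i, M.Indep (B i))
    (hBmax : ∀ i, ∀ B'' : Set X, M.Indep B'' → B i ⊆ B'' → B'' ⊆ Sp i → B'' = B i) :
    (∀ C : Set X, M.Indep C → C.Nonempty →
      ∃ C' : Set X, C' ⊆ (⋃ i, B i) ∧ M.Indep C' ∧ C'.Nonempty ∧
        rad M.E C' ≤ rad M.E C + 2 * δ) ∧
    (∀ ε : ℝ, 0 ≤ ε → δ = ε * matroidOpt M →
      ∀ C : Set X, M.Indep C → C.Nonempty → rad M.E C = matroidOpt M →
        ∃ C' : Set X, C' ⊆ (⋃ i, B i) ∧ M.Indep C' ∧ C'.Nonempty ∧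
          rad M.E C' ≤ (1 + 2 * ε) * matroidOpt M) :=
  stmt19_general M hfin h Sp hdisj hcover pts δ hclose B hBsub hBind hBmax
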